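/- Let n ≥ 2 and 1 ≤ k ≤ (n+1)/2. The number of isomorphisms from F_k(K_{1,n}) to itself (i.e., |Aut(F_k(K_{1,n}))|) equals n! if k ≠ (n+1)/2, and equals 2·n! if k = (n+1)/2. -/

import Mathlib

open Finset

/-- The `k`-token graph of a graph `G`. -/
def tokenGraph {V : Type*} [DecidableEq V] (G : SimpleGraph V) (k : ℕ) :
    SimpleGraph {s : Finset V // s.card = k} where
  Adj A B := ∃ a b : V, G.Adj a b ∧ symmDiff A.1 B.1 = {a, b}
  symm := by
    constructor
    rintro A B ⟨a, b, hab, h⟩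
    exact ⟨a, b, hab, by rwa [symmDiff_comm]⟩
  loopless := by
    constructor
    rintro A ⟨a, b, hab, h⟩
    rw [symmDiff_self] at h
    exact (Finset.insert_ne_empty a {b}) h.symm

/-- The star `K_{1,n}`: vertex `0` is the center, the other `n` vertices are
leaves adjacent exactly to the center. -/
def starGraph (n : ℕ) : SimpleGraph (Fin (n + 1)) where
  Adj i j := (i = 0 ∧ j ≠ 0) ∨ (j = 0 ∧ i ≠ 0)
  symm := by tauto
  loopless := by constructor; rintro i (⟨h1, h2⟩ | ⟨h1, h2⟩) <;> exact h2 h1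

/-!
Splitting the token sets by whether they contain the centre identifies `F_{j+1}(K_{1,n})` with
the bipartite graph of inclusions between the `j`- and the `(j+1)`-subsets of the `n` leaves.
This graph is connected, so an automorphism preserves both sides or swaps them; swapping needs
`C(n, j) = C(n, j+1)`, i.e. `2j + 1 = n`, and then complementation does it.

A side-preserving automorphism is a pair of bijections of the two levels preserving inclusion.
Three distinct `(j+1)`-sets with a common `j`-subset are exactly those that pairwise, but not
jointly, lie in a `(j+2)`-set; this is preserved by the pair, so the images of the
`(j+1)`-supersets of a `j`-set `R` again share a `j`-set, which is where the pair one level down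
sends `R`. Descending to the levels `0` and `1` gives a permutation of the leaves, which then
induces the pair on every level. Hence there are `n!` side-preserving automorphisms.
-/

open Function

namespace Finset

variable {α : Type*} [DecidableEq α] {m : ℕ}

theorem card_inter_le_of_ne {s t : Finset α} (hs : #s = m + 1) (ht : #t = m + 1)
    (hst : s ≠ t) : #(s ∩ t) ≤ m := by
  by_contra! h
  have hs' := eq_of_subset_of_card_le inter_subset_left (by omega : #s ≤ #(s ∩ t))
  have ht' := eq_of_subset_of_card_le inter_subset_right (by omega : #t ≤ #(s ∩ t))
  exact hst (hs'.symm.trans ht')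

theorem card_inter_of_card_union_le {s t : Finset α} (hs : #s = m + 1) (ht : #t = m + 1)
    (hst : s ≠ t) (h : #(s ∪ t) ≤ m + 2) : #(s ∩ t) = m := by
  have := card_inter_le_of_ne hs ht hst
  have := card_union_add_card_inter s t
  omega

theorem inter_eq_of_ne_of_subset {R T₁ T₂ : Finset α} (hR : #R = m) (h₁ : #T₁ = m + 1)
    (h₂ : #T₂ = m + 1) (hR₁ : R ⊆ T₁) (hR₂ : R ⊆ T₂) (h₁₂ : T₁ ≠ T₂) : T₁ ∩ T₂ = R :=
  (eq_of_subset_of_card_le (subset_inter hR₁ hR₂) (hR ▸ card_inter_le_of_ne h₁ h₂ h₁₂)).symm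

theorem card_union_of_ne_of_subset {R T₁ T₂ : Finset α} (hR : #R = m) (h₁ : #T₁ = m + 1)
    (h₂ : #T₂ = m + 1) (hR₁ : R ⊆ T₁) (hR₂ : R ⊆ T₂) (h₁₂ : T₁ ≠ T₂) :
    #(T₁ ∪ T₂) = m + 2 := by
  have := card_union_add_card_inter T₁ T₂
  rw [inter_eq_of_ne_of_subset hR h₁ h₂ hR₁ hR₂ h₁₂] at this
  omega

def LooseTriple (c : ℕ) (s₁ s₂ s₃ : Finset α) : Prop :=
  #(s₁ ∪ s₂) ≤ c ∧ #(s₁ ∪ s₃) ≤ c ∧ #(s₂ ∪ s₃) ≤ c ∧ c < #(s₁ ∪ s₂ ∪ s₃)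

theorem looseTriple_of_subset {R T₁ T₂ T₃ : Finset α} (hR : #R = m)
    (h₁ : #T₁ = m + 1) (h₂ : #T₂ = m + 1) (h₃ : #T₃ = m + 1)
    (hR₁ : R ⊆ T₁) (hR₂ : R ⊆ T₂) (hR₃ : R ⊆ T₃)
    (h₁₂ : T₁ ≠ T₂) (h₁₃ : T₁ ≠ T₃) (h₂₃ : T₂ ≠ T₃) : LooseTriple (m + 2) T₁ T₂ T₃ := by
  have hcore : (T₁ ∪ T₂) ∩ T₃ = R := by
    rw [union_inter_distrib_right, inter_eq_of_ne_of_subset hR h₁ h₃ hR₁ hR₃ h₁₃,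
      inter_eq_of_ne_of_subset hR h₂ h₃ hR₂ hR₃ h₂₃, union_self]
  have := card_union_add_card_inter (T₁ ∪ T₂) T₃
  rw [hcore, card_union_of_ne_of_subset hR h₁ h₂ hR₁ hR₂ h₁₂] at this
  exact ⟨(card_union_of_ne_of_subset hR h₁ h₂ hR₁ hR₂ h₁₂).le,
    (card_union_of_ne_of_subset hR h₁ h₃ hR₁ hR₃ h₁₃).le,
    (card_union_of_ne_of_subset hR h₂ h₃ hR₂ hR₃ h₂₃).le, by omega⟩

/-- If `s₁ ∩ s₂ ⊄ s₃`, the two `m`-sets `s₁ ∩ s₂` and `s₁ ∩ s₃` together cover `s₁`, so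
`s₁ ∪ s₂ ∪ s₃ = s₂ ∪ s₃` would be small. -/
theorem LooseTriple.inter_subset {s₁ s₂ s₃ : Finset α} (h : LooseTriple (m + 2) s₁ s₂ s₃)
    (h₁ : #s₁ = m + 1) (h₃ : #s₃ = m + 1) (h₁₃ : s₁ ≠ s₃) : s₁ ∩ s₂ ⊆ s₃ := by
  obtain ⟨-, u₁₃, u₂₃, u⟩ := h
  by_contra hsub
  obtain ⟨x, hx, hx₃⟩ := not_subset.1 hsub
  have hlt : #(s₁ ∩ s₃) < #(s₁ ∩ (s₂ ∪ s₃)) := by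
    refine card_lt_card ⟨inter_subset_inter_left subset_union_right, fun hle => hx₃ ?_⟩
    rw [mem_inter] at hx
    exact (mem_inter.1 (hle (mem_inter.2 ⟨hx.1, mem_union_left _ hx.2⟩))).2
  have hcover : s₁ ⊆ s₂ ∪ s₃ := by
    have := eq_of_subset_of_card_le (inter_subset_left : s₁ ∩ (s₂ ∪ s₃) ⊆ s₁)
      (by rw [card_inter_of_card_union_le h₁ h₃ h₁₃ u₁₃] at hlt; omega)
    exact this ▸ inter_subset_right
  rw [union_assoc, union_eq_right.2 hcover] at u
  omega

theorem exists_symmDiff_eq_pair_iff {A B : Finset α} {c : α} (hAB : #A = #B) (hc : c ∈ A) :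
    (∃ b, b ≠ c ∧ symmDiff A B = {c, b}) ↔ c ∉ B ∧ A.erase c ⊆ B := by
  constructor
  · rintro ⟨b, hbc, h⟩
    have hcB : c ∉ B := fun hcB => by
      simpa [mem_symmDiff, hc, hcB] using h.ge (mem_insert_self c {b})
    have hcard : #(A \ B) + #(B \ A) = 2 := by
      rw [← card_union_of_disjoint disjoint_sdiff_sdiff, ← sup_eq_union, ← symmDiff_def, h,
        card_pair hbc.symm]
    have hAB' : A \ B = {c} := by
      refine eq_singleton_iff_unique_mem.2 ⟨mem_sdiff.2 ⟨hc, hcB⟩, fun x hx => ?_⟩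
      have := card_sdiff_comm hAB
      exact card_le_one.1 (by omega) x hx c (mem_sdiff.2 ⟨hc, hcB⟩)
    refine ⟨hcB, fun x hx => by_contra fun hxB => ne_of_mem_erase hx ?_⟩
    simpa [hAB'] using mem_sdiff.2 ⟨mem_of_mem_erase hx, hxB⟩
  · rintro ⟨hcB, hsub⟩
    have hA := card_pos.2 ⟨c, hc⟩
    obtain ⟨b, hb, rfl⟩ := (exists_eq_insert_iff (s := A.erase c) (t := B)).2
      ⟨hsub, by rw [card_erase_of_mem hc]; omega⟩
    have hbc : b ≠ c := fun h => hcB (h ▸ mem_insert_self b _)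
    refine ⟨b, hbc, ext fun x => ?_⟩
    simp only [mem_symmDiff, mem_insert, mem_erase, mem_singleton] at hb ⊢
    grind

end Finset

abbrev Slice (α : Type*) (j : ℕ) := {s : Finset α // #s = j}

namespace Slice

variable {α : Type*}

instance : Subsingleton (Slice α 0) :=
  ⟨fun s t => Subtype.ext (by rw [card_eq_zero.1 s.2, card_eq_zero.1 t.2])⟩

noncomputable def singletonEquiv : α ≃ Slice α 1 :=
  Equiv.ofBijective (fun a => ⟨{a}, card_singleton a⟩)
    ⟨fun _ _ h => singleton_injective (congrArg Subtype.val h), fun s => by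
      obtain ⟨a, ha⟩ := card_eq_one.1 s.2
      exact ⟨a, Subtype.ext ha.symm⟩⟩

@[simp]
theorem coe_singletonEquiv (a : α) : (singletonEquiv a).1 = {a} := rfl

theorem exists_superset_iff [Fintype α] {s : Finset α} {c : ℕ} (hc : c ≤ Fintype.card α) :
    (∃ U : Slice α c, s ⊆ U.1) ↔ #s ≤ c := by
  refine ⟨fun ⟨U, hU⟩ => U.2 ▸ card_le_card hU, fun hs => ?_⟩
  obtain ⟨U, hsU, -, hU⟩ := exists_subsuperset_card_eq (subset_univ s) hs (by simpa using hc)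
  exact ⟨⟨U, hU⟩, hsU⟩

variable [DecidableEq α] [Fintype α] {j : ℕ}

theorem exists_ne_supersets (hj : j + 2 ≤ Fintype.card α) (R : Slice α j) :
    ∃ T₁ T₂ : Slice α (j + 1), R.1 ⊆ T₁.1 ∧ R.1 ⊆ T₂.1 ∧ T₁ ≠ T₂ := by
  obtain ⟨a, ha, b, hb, hab⟩ := one_lt_card.1 (by rw [card_compl, R.2]; omega : 1 < #R.1ᶜ)
  rw [mem_compl] at ha hb
  refine ⟨⟨insert a R.1, by rw [card_insert_of_notMem ha, R.2]⟩,
    ⟨insert b R.1, by rw [card_insert_of_notMem hb, R.2]⟩, subset_insert _ _, subset_insert _ _,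
    fun h => ?_⟩
  simpa [ha, hab] using congrArg (a ∈ ·.1) h

theorem eq_of_forall_subset_iff (hj : j + 2 ≤ Fintype.card α) {R R' : Slice α j}
    (h : ∀ S : Slice α (j + 1), R.1 ⊆ S.1 ↔ R'.1 ⊆ S.1) : R = R' := by
  obtain ⟨T₁, T₂, h₁, h₂, h₁₂⟩ := exists_ne_supersets hj R
  have hR := inter_eq_of_ne_of_subset R.2 T₁.2 T₂.2 h₁ h₂ (Subtype.coe_injective.ne h₁₂)
  refine Subtype.ext (eq_of_subset_of_card_le ?_ (by rw [R.2, R'.2])).symm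
  exact hR ▸ subset_inter ((h T₁).1 h₁) ((h T₂).1 h₂)

def complEquiv {k : ℕ} (h : j + k = Fintype.card α) : Slice α j ≃ Slice α k where
  toFun R := ⟨R.1ᶜ, by rw [card_compl, R.2]; omega⟩
  invFun S := ⟨S.1ᶜ, by rw [card_compl, S.2]; omega⟩
  left_inv R := by simp
  right_inv S := by simp

@[simp]
theorem coe_complEquiv_apply {k : ℕ} (h : j + k = Fintype.card α) (R : Slice α j) :
    (complEquiv h R).1 = R.1ᶜ := rfl

end Slice

namespace Equiv.Perm

variable {α : Type*}

def sliceCongr (σ : Perm α) (j : ℕ) : Slice α j ≃ Slice α j :=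
  σ.finsetCongr.subtypeEquiv fun s => by simp

@[simp]
theorem coe_sliceCongr_apply (σ : Perm α) {j : ℕ} (s : Slice α j) :
    (σ.sliceCongr j s).1 = s.1.map σ.toEmbedding := rfl

theorem sliceCongr_injective [Fintype α] [DecidableEq α] {k : ℕ} (hk : 1 ≤ k)
    (hkα : k < Fintype.card α) : Injective fun σ : Perm α => σ.sliceCongr k := by
  intro σ τ h
  ext x
  by_contra hx
  have hxy : τ.symm (σ x) ≠ x := fun e => hx (τ.symm_apply_eq.1 e)
  obtain ⟨S, hxS, hSy, hS⟩ := exists_subsuperset_card_eq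
    (singleton_subset_iff.2 (mem_erase.2 ⟨hxy.symm, mem_univ x⟩)) (by simpa using hk)
    (by rw [card_erase_of_mem (mem_univ _), card_univ]; omega)
  have hmap : S.map σ.toEmbedding = S.map τ.toEmbedding := by
    simpa using congrArg (fun e : Slice α k ≃ Slice α k => (e ⟨S, hS⟩).1) h
  obtain ⟨z, hz, hzx⟩ :=
    mem_map.1 (hmap ▸ mem_map_of_mem σ.toEmbedding (singleton_subset_iff.1 hxS))
  have hzy : z = τ.symm (σ x) := τ.eq_symm_apply.2 hzx
  exact (mem_erase.1 (hSy (hzy ▸ hz))).1 rfl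

end Equiv.Perm

@[ext]
structure SliceIso (α : Type*) (j : ℕ) where
  lower : Slice α j ≃ Slice α j
  upper : Slice α (j + 1) ≃ Slice α (j + 1)
  subset_iff : ∀ R S, (lower R).1 ⊆ (upper S).1 ↔ R.1 ⊆ S.1

namespace SliceIso

variable {α : Type*} {j : ℕ}

def ofPerm (σ : Equiv.Perm α) : SliceIso α j where
  lower := σ.sliceCongr j
  upper := σ.sliceCongr (j + 1)
  subset_iff _ _ := by simp

theorem coe_lower_ne (P : SliceIso α j) {T T' : Slice α j} (h : T ≠ T') :
    (P.lower T).1 ≠ (P.lower T').1 :=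
  Subtype.coe_injective.ne (P.lower.injective.ne h)

theorem eq_ofPerm_of_lower_eq (P : SliceIso α (j + 1)) {σ : Equiv.Perm α}
    (h : P.lower = σ.sliceCongr (j + 1)) : P = ofPerm σ := by
  refine SliceIso.ext h (Equiv.ext fun T => Subtype.ext ?_)
  refine (eq_of_subset_of_card_le (fun y hy => ?_)
    (by rw [(P.upper T).2, ((ofPerm σ).upper T).2])).symm
  obtain ⟨t, ht, rfl⟩ := mem_map.1 hy
  obtain ⟨R, htR, hRT, hR⟩ := exists_subsuperset_card_eq (singleton_subset_iff.2 ht)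
    (by simp : #{t} ≤ j + 1) (by rw [T.2]; omega)
  have hsub := (P.subset_iff ⟨R, hR⟩ T).2 hRT
  rw [h, Equiv.Perm.coe_sliceCongr_apply] at hsub
  exact hsub (mem_map_of_mem _ (singleton_subset_iff.1 htR))

variable [DecidableEq α] [Fintype α]

theorem card_sup_lower_le_iff (P : SliceIso α j) (hj : j + 1 ≤ Fintype.card α)
    (F : Finset (Slice α j)) :
    #(F.sup fun T => (P.lower T).1) ≤ j + 1 ↔ #(F.sup Subtype.val) ≤ j + 1 := by
  simp only [← Slice.exists_superset_iff hj, Finset.sup_le_iff]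
  constructor
  · rintro ⟨U, hU⟩
    exact ⟨P.upper.symm U, fun T hT => (P.subset_iff T _).1 (by simpa using hU T hT)⟩
  · rintro ⟨U, hU⟩
    exact ⟨P.upper U, fun T hT => (P.subset_iff T U).2 (hU T hT)⟩

theorem looseTriple_lower_iff (P : SliceIso α j) (hj : j + 1 ≤ Fintype.card α)
    (T₁ T₂ T₃ : Slice α j) :
    LooseTriple (j + 1) (P.lower T₁).1 (P.lower T₂).1 (P.lower T₃).1 ↔
      LooseTriple (j + 1) T₁.1 T₂.1 T₃.1 := by
  have pair (A B : Slice α j) := P.card_sup_lower_le_iff hj {A, B}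
  have triple := P.card_sup_lower_le_iff hj {T₁, T₂, T₃}
  simp only [sup_insert, sup_singleton, sup_eq_union] at pair triple
  simp only [LooseTriple, pair, ← not_le, union_assoc, triple]

def downFun (P : SliceIso α (j + 1)) (R : Slice α j) : Finset α :=
  ({T | R.1 ⊆ T.1} : Finset (Slice α (j + 1))).inf fun T => (P.lower T).1

section Down

variable (P : SliceIso α (j + 1)) (hj : j + 2 ≤ Fintype.card α)
include hj

theorem downFun_eq {R : Slice α j} {T₁ T₂ : Slice α (j + 1)} (h₁ : R.1 ⊆ T₁.1)
    (h₂ : R.1 ⊆ T₂.1) (h₁₂ : T₁ ≠ T₂) : P.downFun R = (P.lower T₁).1 ∩ (P.lower T₂).1 := by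
  refine le_antisymm (le_inf (inf_le (by simpa)) (inf_le (by simpa)))
    (Finset.le_inf fun T₃ h₃ => ?_)
  simp only [mem_filter, mem_univ, true_and] at h₃
  obtain rfl | h₁₃ := eq_or_ne T₁ T₃
  · exact inter_subset_left
  obtain rfl | h₂₃ := eq_or_ne T₂ T₃
  · exact inter_subset_right
  have hT := looseTriple_of_subset R.2 T₁.2 T₂.2 T₃.2 h₁ h₂ h₃ (Subtype.coe_injective.ne h₁₂)
    (Subtype.coe_injective.ne h₁₃) (Subtype.coe_injective.ne h₂₃)
  exact ((P.looseTriple_lower_iff hj T₁ T₂ T₃).2 hT).inter_subset (P.lower T₁).2 (P.lower T₃).2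
    (P.coe_lower_ne h₁₃)

theorem card_downFun (R : Slice α j) : #(P.downFun R) = j := by
  obtain ⟨T₁, T₂, h₁, h₂, h₁₂⟩ := Slice.exists_ne_supersets hj R
  rw [P.downFun_eq hj h₁ h₂ h₁₂]
  refine card_inter_of_card_union_le (P.lower T₁).2 (P.lower T₂).2 (P.coe_lower_ne h₁₂) ?_
  have := (P.card_sup_lower_le_iff hj {T₁, T₂}).2
  simp only [sup_insert, sup_singleton, sup_eq_union] at this
  exact this (card_union_of_ne_of_subset R.2 T₁.2 T₂.2 h₁ h₂ (Subtype.coe_injective.ne h₁₂)).le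

theorem downFun_subset_iff (R : Slice α j) (S : Slice α (j + 1)) :
    P.downFun R ⊆ (P.lower S).1 ↔ R.1 ⊆ S.1 := by
  refine ⟨fun hS => ?_, fun hRS => inf_le (by simpa)⟩
  obtain ⟨T₁, T₂, h₁, h₂, h₁₂⟩ := Slice.exists_ne_supersets hj R
  rw [← inter_eq_of_ne_of_subset R.2 T₁.2 T₂.2 h₁ h₂ (Subtype.coe_injective.ne h₁₂)]
  obtain rfl | h₁S := eq_or_ne T₁ S
  · exact inter_subset_left
  obtain rfl | h₂S := eq_or_ne T₂ S
  · exact inter_subset_right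
  have hD := P.downFun_eq hj h₁ h₂ h₁₂
  have hL := looseTriple_of_subset (P.card_downFun hj R) (P.lower T₁).2 (P.lower T₂).2
    (P.lower S).2 (hD ▸ inter_subset_left) (hD ▸ inter_subset_right) hS
    (P.coe_lower_ne h₁₂) (P.coe_lower_ne h₁S) (P.coe_lower_ne h₂S)
  exact ((P.looseTriple_lower_iff hj T₁ T₂ S).1 hL).inter_subset T₁.2 S.2
    (Subtype.coe_injective.ne h₁S)

noncomputable def down : SliceIso α j where
  lower := Equiv.ofBijective (fun R => ⟨P.downFun R, P.card_downFun hj R⟩) <|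
    Finite.injective_iff_bijective.1 fun R R' h => Slice.eq_of_forall_subset_iff hj fun S => by
      rw [← P.downFun_subset_iff hj R S, ← P.downFun_subset_iff hj R' S]
      exact iff_of_eq (congrArg (· ⊆ (P.lower S).1) (congrArg Subtype.val h))
  upper := P.lower
  subset_iff := P.downFun_subset_iff hj

end Down

theorem exists_eq_ofPerm (P : SliceIso α j) (hj : 2 * j + 1 ≤ Fintype.card α) :
    ∃ σ : Equiv.Perm α, P = ofPerm σ := by
  induction j with
  | zero =>
    refine ⟨Slice.singletonEquiv.trans (P.upper.trans Slice.singletonEquiv.symm),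
      SliceIso.ext (Subsingleton.elim _ _) (Equiv.ext fun S => ?_)⟩
    obtain ⟨a, rfl⟩ := Slice.singletonEquiv.surjective S
    rw [Subtype.ext_iff]
    change _ = map _ {a}
    rw [map_singleton, ← Slice.coe_singletonEquiv]
    simp
  | succ j ih =>
    obtain ⟨σ, hσ⟩ := ih (P.down (by omega)) (by omega)
    exact ⟨σ, P.eq_ofPerm_of_lower_eq (congrArg SliceIso.upper hσ)⟩

end SliceIso

theorem SimpleGraph.Preconnected.eq_of_forall_adj {V β : Type*} {G : SimpleGraph V}
    (hG : G.Preconnected) {f : V → β} (hf : ∀ x y, G.Adj x y → f x = f y) (x y : V) :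
    f x = f y := by
  obtain ⟨p⟩ := hG x y
  induction p with
  | nil => rfl
  | cons h _ ih => exact (hf _ _ h).trans ih

theorem SimpleGraph.Preconnected.coloring_iso_eq_or_eq_not {V : Type*} {G : SimpleGraph V}
    (hG : G.Preconnected) (C : G.Coloring Bool) (φ : G ≃g G) :
    (∀ x, C (φ x) = C x) ∨ ∀ x, C (φ x) = !C x := by
  have hconst := hG.eq_of_forall_adj (f := fun x => C (φ x) == C x) fun x y h => by
    have h₁ := C.valid h
    have h₂ := C.valid (φ.map_adj_iff.2 h)
    revert h₁ h₂
    cases C x <;> cases C y <;> cases C (φ x) <;> cases C (φ y) <;> decide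
  by_cases h : ∀ x, C (φ x) = C x
  · exact .inl h
  obtain ⟨x₀, hx₀⟩ := not_forall.1 h
  refine .inr fun x => ?_
  have := hconst x x₀
  revert hx₀ this
  cases C x <;> cases C x₀ <;> cases C (φ x) <;> cases C (φ x₀) <;> decide

instance {V W : Type*} [Finite V] [Finite W] {G : SimpleGraph V} {H : SimpleGraph W} :
    Finite (G ≃g H) :=
  Finite.of_injective _ RelIso.toEquiv_injective

def sliceGraph (α : Type*) (j : ℕ) : SimpleGraph (Slice α j ⊕ Slice α (j + 1)) where
  Adj
    | .inl R, .inr S | .inr S, .inl R => R.1 ⊆ S.1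
    | _, _ => False
  symm := ⟨by rintro (_ | _) (_ | _) h <;> exact h⟩
  loopless := ⟨by rintro (_ | _) h <;> exact h⟩

namespace sliceGraph

variable {α : Type*} {j : ℕ}

@[simp]
theorem adj_inl_inr {R : Slice α j} {S : Slice α (j + 1)} :
    (sliceGraph α j).Adj (.inl R) (.inr S) ↔ R.1 ⊆ S.1 := .rfl

@[simp]
theorem adj_inr_inl {R : Slice α j} {S : Slice α (j + 1)} :
    (sliceGraph α j).Adj (.inr S) (.inl R) ↔ R.1 ⊆ S.1 := .rfl

@[simp]
theorem not_adj_inl_inl {R R' : Slice α j} : ¬(sliceGraph α j).Adj (.inl R) (.inl R') := id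

@[simp]
theorem not_adj_inr_inr {S S' : Slice α (j + 1)} : ¬(sliceGraph α j).Adj (.inr S) (.inr S') := id

def sideColoring : (sliceGraph α j).Coloring Bool :=
  SimpleGraph.Coloring.mk Sum.isLeft <| by rintro (_ | _) (_ | _) h <;> simp_all

end sliceGraph

namespace SliceIso

variable {α : Type*} {j : ℕ}

def toAut (P : SliceIso α j) : sliceGraph α j ≃g sliceGraph α j where
  toEquiv := Equiv.sumCongr P.lower P.upper
  map_rel_iff' := by rintro (R | S) (R' | S') <;> simp [P.subset_iff]

theorem exists_toAut_eq [Finite α] (φ : sliceGraph α j ≃g sliceGraph α j)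
    (hφ : ∀ x, (φ x).isLeft = x.isLeft) : ∃ P : SliceIso α j, P.toAut = φ := by
  obtain ⟨⟨f, g⟩, hfg⟩ := Equiv.Perm.mem_sumCongrHom_range_of_perm_mapsTo_inl
    (σ := φ.toEquiv) <| by
      rintro _ ⟨R, rfl⟩
      obtain ⟨R', h⟩ := Sum.isLeft_iff.1 ((hφ (.inl R)).trans rfl)
      exact ⟨R', h.symm⟩
  have hφx (x) : φ x = Equiv.sumCongr f g x := by
    change φ.toEquiv x = _
    rw [← hfg]
    rfl
  refine ⟨⟨f, g, fun R S => ?_⟩, RelIso.ext fun x => (hφx x).symm⟩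
  simpa [hφx] using φ.map_adj_iff (v := .inl R) (w := .inr S)

end SliceIso

namespace sliceGraph

variable {α : Type*} [DecidableEq α] {j : ℕ}

theorem reachable_inl (R R' : Slice α j) : (sliceGraph α j).Reachable (.inl R) (.inl R') := by
  obtain ⟨d, hd⟩ : ∃ d, #(R'.1 \ R.1) = d := ⟨_, rfl⟩
  induction d generalizing R with
  | zero =>
    rw [card_eq_zero, sdiff_eq_empty_iff_subset] at hd
    rw [Subtype.ext (eq_of_subset_of_card_le hd (by rw [R.2, R'.2]))]
  | succ d ih =>
    obtain ⟨a, ha⟩ : (R'.1 \ R.1).Nonempty := card_pos.1 (by omega)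
    obtain ⟨b, hb⟩ : (R.1 \ R'.1).Nonempty :=
      card_pos.1 (by rw [card_sdiff_comm (R.2.trans R'.2.symm)]; omega)
    rw [mem_sdiff] at ha hb
    let T : Slice α (j + 1) := ⟨insert a R.1, by rw [card_insert_of_notMem ha.2, R.2]⟩
    let R₁ : Slice α j :=
      ⟨T.1.erase b, by rw [card_erase_of_mem (mem_insert_of_mem hb.1), T.2]; rfl⟩
    have hR₁ : #(R'.1 \ R₁.1) = d := by
      rw [show R'.1 \ R₁.1 = (R'.1 \ R.1).erase a by ext x; simp [R₁, T]; grind,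
        card_erase_of_mem (mem_sdiff.2 ha), hd, Nat.add_sub_cancel]
    have hRT : (sliceGraph α j).Adj (.inl R) (.inr T) := subset_insert a R.1
    have hR₁T : (sliceGraph α j).Adj (.inr T) (.inl R₁) := erase_subset b T.1
    exact hRT.reachable.trans (hR₁T.reachable.trans (ih R₁ hR₁))

theorem preconnected : (sliceGraph α j).Preconnected := by
  have reach_inl : ∀ x, ∃ R, (sliceGraph α j).Reachable x (.inl R) := by
    rintro (R | S)
    · exact ⟨R, .rfl⟩
    · obtain ⟨s, hs⟩ : S.1.Nonempty := card_pos.1 (by rw [S.2]; omega)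
      exact ⟨⟨S.1.erase s, by rw [card_erase_of_mem hs, S.2]; rfl⟩,
        SimpleGraph.Adj.reachable (erase_subset s S.1)⟩
  intro x y
  obtain ⟨R, hx⟩ := reach_inl x
  obtain ⟨R', hy⟩ := reach_inl y
  exact hx.trans ((reachable_inl R R').trans hy.symm)

variable [Fintype α]

theorem card_isLeft_preserving (hα : 2 ≤ Fintype.card α) (hj : 2 * j + 1 ≤ Fintype.card α) :
    Nat.card {φ : sliceGraph α j ≃g sliceGraph α j // ∀ x, (φ x).isLeft = x.isLeft} =
      (Fintype.card α).factorial := by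
  rw [← Fintype.card_perm, ← Nat.card_eq_fintype_card]
  refine (Nat.card_congr (Equiv.ofBijective
    (fun σ => ⟨(SliceIso.ofPerm σ).toAut, by rintro (_ | _) <;> rfl⟩)
    ⟨fun σ τ h => ?_, ?_⟩)).symm
  · refine Equiv.Perm.sliceCongr_injective (k := j + 1) (by omega) (by omega)
      (Equiv.ext fun S => Sum.inr_injective (α := Slice α j) ?_)
    exact congrArg (fun φ : {φ : sliceGraph α j ≃g sliceGraph α j // _} => φ.1 (.inr S)) h
  · rintro ⟨φ, hφ⟩
    obtain ⟨P, rfl⟩ := SliceIso.exists_toAut_eq φ hφ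
    obtain ⟨σ, rfl⟩ := P.exists_eq_ofPerm hj
    exact ⟨σ, rfl⟩

theorem isLeft_apply_of_ne (hj : j ≤ Fintype.card α) (h : 2 * j + 1 ≠ Fintype.card α)
    (φ : sliceGraph α j ≃g sliceGraph α j) (x) : (φ x).isLeft = x.isLeft := by
  refine (preconnected.coloring_iso_eq_or_eq_not sideColoring φ).resolve_right
    (fun hφ => h ?_) x
  have hcard := Fintype.card_congr <| Equiv.sumIsLeft.symm.trans <|
    (φ.toEquiv.subtypeEquiv fun x => ?_).trans (Equiv.sumIsRight (α := Slice α j))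
  · simp only [Fintype.card_finset_len] at hcard
    have := Nat.choose_succ_right_eq (Fintype.card α) j
    rw [← hcard] at this
    have := Nat.eq_of_mul_eq_mul_left (Nat.choose_pos hj) this
    omega
  · rw [← Sum.not_isLeft, show (φ.toEquiv x).isLeft = !x.isLeft from hφ x]
    simp

def complIso (h : 2 * j + 1 = Fintype.card α) : sliceGraph α j ≃g sliceGraph α j where
  toEquiv := (Equiv.sumCongr (Slice.complEquiv (by omega)) (Slice.complEquiv (by omega))).trans
    (Equiv.sumComm _ _)
  map_rel_iff' := by rintro (R | S) (R' | S') <;> simp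

@[simp]
theorem isLeft_complIso (h : 2 * j + 1 = Fintype.card α) (x : Slice α j ⊕ Slice α (j + 1)) :
    (complIso h x).isLeft = !x.isLeft := by
  cases x <;> rfl

@[simp]
theorem complIso_complIso (h : 2 * j + 1 = Fintype.card α) (x : Slice α j ⊕ Slice α (j + 1)) :
    complIso h (complIso h x) = x := by
  cases x <;> simp [complIso, Subtype.ext_iff]

theorem card_isLeft_reversing (h : 2 * j + 1 = Fintype.card α) :
    Nat.card {φ : sliceGraph α j ≃g sliceGraph α j // ¬∀ x, (φ x).isLeft = x.isLeft} =
      Nat.card {φ : sliceGraph α j ≃g sliceGraph α j // ∀ x, (φ x).isLeft = x.isLeft} := by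
  obtain ⟨R₀, -, hR₀⟩ := exists_subset_card_eq (s := (univ : Finset α)) (n := j) (by simp; omega)
  refine Nat.card_congr
    { toFun φ := ⟨φ.1.trans (complIso h), fun x => ?_⟩
      invFun ψ := ⟨ψ.1.trans (complIso h), fun hψ => ?_⟩
      left_inv φ := Subtype.ext (RelIso.ext fun x => complIso_complIso h _)
      right_inv ψ := Subtype.ext (RelIso.ext fun x => complIso_complIso h _) }
  · have : (φ.1 x).isLeft = !x.isLeft :=
      (preconnected.coloring_iso_eq_or_eq_not sideColoring φ.1).resolve_left φ.2 x
    change (complIso h (φ.1 x)).isLeft = _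
    rw [isLeft_complIso, this, Bool.not_not]
  · simpa [ψ.2] using hψ (.inl ⟨R₀, hR₀⟩)

theorem card_aut (hα : 2 ≤ Fintype.card α) (hj : 2 * j + 1 ≤ Fintype.card α) :
    Nat.card (sliceGraph α j ≃g sliceGraph α j) =
      if 2 * j + 1 = Fintype.card α then 2 * (Fintype.card α).factorial
      else (Fintype.card α).factorial := by
  rw [← Nat.card_congr (Equiv.sumCompl fun φ : sliceGraph α j ≃g sliceGraph α j =>
    ∀ x, (φ x).isLeft = x.isLeft), Nat.card_sum, card_isLeft_preserving hα hj]
  split_ifs with h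
  · rw [card_isLeft_reversing h, card_isLeft_preserving hα hj, two_mul]
  · have : IsEmpty {φ : sliceGraph α j ≃g sliceGraph α j // ¬∀ x, (φ x).isLeft = x.isLeft} :=
      ⟨fun φ => φ.2 (isLeft_apply_of_ne (by omega) h φ.1)⟩
    rw [Nat.card_of_isEmpty, add_zero]

end sliceGraph

theorem tokenGraph_starGraph_adj {n k : ℕ} {A B : Slice (Fin (n + 1)) k} :
    (tokenGraph (starGraph n) k).Adj A B ↔
      (0 ∈ A.1 ∧ 0 ∉ B.1 ∧ A.1.erase 0 ⊆ B.1) ∨ (0 ∈ B.1 ∧ 0 ∉ A.1 ∧ B.1.erase 0 ⊆ A.1) := by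
  have hpair : (tokenGraph (starGraph n) k).Adj A B ↔
      ∃ b, b ≠ 0 ∧ symmDiff A.1 B.1 = {0, b} := by
    refine ⟨?_, fun ⟨b, hb, h⟩ => ⟨0, b, .inl ⟨rfl, hb⟩, h⟩⟩
    rintro ⟨a, b, ⟨rfl, hb⟩ | ⟨rfl, ha⟩, h⟩
    exacts [⟨b, hb, h⟩, ⟨a, ha, h.trans (pair_comm a 0)⟩]
  rw [hpair]
  by_cases h0A : 0 ∈ A.1
  · rw [exists_symmDiff_eq_pair_iff (A.2.trans B.2.symm) h0A]
    tauto
  by_cases h0B : 0 ∈ B.1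
  · rw [symmDiff_comm, exists_symmDiff_eq_pair_iff (B.2.trans A.2.symm) h0B]
    tauto
  simp only [h0A, h0B, false_and, or_false, iff_false, not_exists, not_and]
  intro b _ h
  simpa [mem_symmDiff, h0A, h0B] using h.ge (mem_insert_self 0 {b})

noncomputable def sliceGraphIsoTokenGraphStar (n j : ℕ) :
    sliceGraph (Fin n) j ≃g tokenGraph (starGraph n) (j + 1) := by
  let tokens : Slice (Fin n) j ⊕ Slice (Fin n) (j + 1) → Slice (Fin (n + 1)) (j + 1)
    | .inl R => ⟨(R.1.map (Fin.succEmb n)).cons 0 (by simp [Fin.succ_ne_zero]), by simp [R.2]⟩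
    | .inr S => ⟨S.1.map (Fin.succEmb n), by simp [S.2]⟩
  have hinj : Injective tokens := by
    rintro (R | S) (R' | S') h <;> simp only [tokens, Subtype.ext_iff, cons_eq_insert] at h
    · exact congrArg Sum.inl
        (Subtype.ext (by simpa [Fin.succ_ne_zero] using congrArg (·.erase 0) h))
    · simpa [Fin.succ_ne_zero] using h.le (mem_insert_self 0 _)
    · simpa [Fin.succ_ne_zero] using h.ge (mem_insert_self 0 _)
    · exact congrArg Sum.inr (Subtype.ext (map_injective _ h))
  have hcard : Fintype.card (Slice (Fin n) j ⊕ Slice (Fin n) (j + 1)) =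
      Fintype.card (Slice (Fin (n + 1)) (j + 1)) := by
    simp [Nat.choose_succ_succ]
  refine ⟨.ofBijective tokens ((Fintype.bijective_iff_injective_and_card _).2 ⟨hinj, hcard⟩), ?_⟩
  rintro (R | S) (R' | S') <;> simp [tokens, tokenGraph_starGraph_adj, Fin.succ_ne_zero]

/-- the number of automorphisms of F_k(K_{1,n}) is n! when
k ≠ (n+1)/2, and 2·n! when k = (n+1)/2. -/
theorem card_aut_token_graph_of_star (n k : ℕ)
    (hn : 2 ≤ n) (hk1 : 1 ≤ k) (hk : 2 * k ≤ n + 1) :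
    Nat.card (tokenGraph (starGraph n) k ≃g tokenGraph (starGraph n) k) =
      if 2 * k = n + 1 then 2 * n.factorial else n.factorial := by
  obtain ⟨j, rfl⟩ : ∃ j, k = j + 1 := ⟨k - 1, by omega⟩
  rw [← Nat.card_congr (RelIso.relIsoCongr (sliceGraphIsoTokenGraphStar n j)
      (sliceGraphIsoTokenGraphStar n j)),
    sliceGraph.card_aut (by simpa using hn) (by simp; omega)]
  simp only [Fintype.card_fin, show 2 * j + 1 = n ↔ 2 * (j + 1) = n + 1 by omega]
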